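/- For every positive definite quadratic form Q in 2 variables, the packing-covering constant satisfies γ(Q) ≥ 2/√3 = 1.1547…, with equality attained by the form Q_{A*_2}; i.e., γ_2 = 2/√3 (Ryshkov's theorem). -/

import Mathlib

open Matrix

noncomputable section

/-- `Q[x] = xᵀ Q x`. -/
def quadForm {d : ℕ} (Q : Matrix (Fin d) (Fin d) ℝ) (x : Fin d → ℝ) : ℝ :=
  x ⬝ᵥ (Q *ᵥ x)

/-- Coercion of an integer vector to a real vector. -/
def intCast {d : ℕ} (v : Fin d → ℤ) : Fin d → ℝ := fun i => (v i : ℝ)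

/-- A positive definite quadratic form: a symmetric positive definite real matrix. -/
def IsPQF {d : ℕ} (Q : Matrix (Fin d) (Fin d) ℝ) : Prop :=
  Q.IsSymm ∧ Q.PosDef

/-- The homogeneous minimum `λ(Q) = min {Q[v] : v ∈ ℤ^d \ {0}}`. -/
def homMin {d : ℕ} (Q : Matrix (Fin d) (Fin d) ℝ) : ℝ :=
  sInf {r | ∃ v : Fin d → ℤ, v ≠ 0 ∧ r = quadForm Q (intCast v)}

/-- The set of minimal vectors `Min(Q)`. -/
def minVecs {d : ℕ} (Q : Matrix (Fin d) (Fin d) ℝ) : Set (Fin d → ℤ) :=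
  {v | v ≠ 0 ∧ quadForm Q (intCast v) = homMin Q}

/-- The inhomogeneous minimum `μ(Q) = max_{x ∈ ℝ^d} min_{v ∈ ℤ^d} Q[x - v]`. -/
def inhomMin {d : ℕ} (Q : Matrix (Fin d) (Fin d) ℝ) : ℝ :=
  ⨆ x : Fin d → ℝ, ⨅ v : Fin d → ℤ, quadForm Q (x - intCast v)

/-- `κ_d`, the volume of the `d`-dimensional Euclidean unit ball. -/
def ballVol (d : ℕ) : ℝ :=
  (MeasureTheory.volume (Metric.ball (0 : EuclideanSpace ℝ (Fin d)) 1)).toReal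

/-- The packing density `δ(Q)`. -/
def packDensity {d : ℕ} (Q : Matrix (Fin d) (Fin d) ℝ) : ℝ :=
  Real.sqrt (homMin Q ^ d / Q.det) * ballVol d / 2 ^ d

/-- The covering density `Θ(Q)`. -/
def covDensity {d : ℕ} (Q : Matrix (Fin d) (Fin d) ℝ) : ℝ :=
  Real.sqrt (inhomMin Q ^ d / Q.det) * ballVol d

/-- The packing-covering constant `γ(Q)`. -/
def pcConst {d : ℕ} (Q : Matrix (Fin d) (Fin d) ℝ) : ℝ :=
  2 * Real.sqrt (inhomMin Q / homMin Q)

/-- `Q` is perfect: it is the unique symmetric matrix `Q'` with `Q'[v] = λ(Q)`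
for all `v ∈ Min(Q)`. -/
def IsPerfectForm {d : ℕ} (Q : Matrix (Fin d) (Fin d) ℝ) : Prop :=
  ∀ Q' : Matrix (Fin d) (Fin d) ℝ, Q'.IsSymm →
    (∀ v ∈ minVecs Q, quadForm Q' (intCast v) = homMin Q) → Q' = Q

/-- `Q` is eutactic: `Q⁻¹ = Σ_{v ∈ Min(Q)} c_v · v vᵀ` with all `c_v > 0`. -/
def IsEutacticForm {d : ℕ} (Q : Matrix (Fin d) (Fin d) ℝ) : Prop :=
  ∃ (s : Finset (Fin d → ℤ)) (c : (Fin d → ℤ) → ℝ),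
    (s : Set (Fin d → ℤ)) = minVecs Q ∧ (∀ v ∈ s, 0 < c v) ∧
    Q⁻¹ = ∑ v ∈ s, c v • vecMulVec (intCast v) (intCast v)

/-- `Q` is extreme: a local maximum of the packing density among PQFs. -/
def IsExtremeForm {d : ℕ} (Q : Matrix (Fin d) (Fin d) ℝ) : Prop :=
  ∃ ε > (0 : ℝ), ∀ Q' : Matrix (Fin d) (Fin d) ℝ, IsPQF Q' →
    (∀ i j, |Q' i j - Q i j| < ε) → packDensity Q' ≤ packDensity Q

/-- The form `Q_{A*_d}` with diagonal entries `d` and off-diagonal entries `-1`. -/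
def QAstar (d : ℕ) : Matrix (Fin d) (Fin d) ℝ :=
  Matrix.of fun i j => if i = j then (d : ℝ) else -1

/-!
Let `v` be a minimal vector of `Q`. Among the lattice points strictly on one side of the line
`ℝ v`, choose `u` for which the `Q`-circle through `0, v, u` reaches least far into that side.
That circle has no lattice point inside, so its center `x` satisfies
`min_w Q[x - w] = Q[x] = Q[x - v] = Q[x - u]`, and the three-point identity
`Q[p + q + r] + Q[p - q] + Q[p - r] + Q[q - r] = 3 (Q[p] + Q[q] + Q[r])` at `x, x - v, x - u`
gives `9 Q[x] ≥ Q[v] + Q[u] + Q[u - v] ≥ 3 λ(Q)`. Hence `μ(Q) ≥ λ(Q) / 3`.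

For `Q_{A*_2}`, `λ = 2`, and the unit square splits into the triangles `0, e₀, e₀ + e₁` and
`0, e₁, e₀ + e₁`, all of whose sides have `Q`-length `2`. For a point `y = Σ λᵢ pᵢ` of such a
triangle, `Σ λᵢ Q[y - pᵢ] = 2 Σ_{i<j} λᵢ λⱼ ≤ 2/3`, so `μ ≤ 2/3`.
-/
lemma exists_isMinOn_of_finite_sublevel {α β : Type*} [LinearOrder β] {s : Set α} {f : α → β}
    (hs : s.Nonempty) (hf : ∀ c, {a ∈ s | f a ≤ c}.Finite) : ∃ a ∈ s, IsMinOn f s a := by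
  obtain ⟨a₀, ha₀⟩ := hs
  obtain ⟨a, ⟨has, -⟩, hmin⟩ := Set.exists_min_image _ f (hf (f a₀)) ⟨a₀, ha₀, le_rfl⟩
  refine ⟨a, has, fun b hb => ?_⟩
  rcases le_total (f b) (f a₀) with hba | hab
  · exact hmin b ⟨hb, hba⟩
  · exact (hmin a₀ ⟨ha₀, le_rfl⟩).trans hab

namespace QuadForm

variable {d : ℕ} {Q : Matrix (Fin d) (Fin d) ℝ}

lemma quadForm_smul (Q : Matrix (Fin d) (Fin d) ℝ) (c : ℝ) (x : Fin d → ℝ) :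
    quadForm Q (c • x) = c ^ 2 * quadForm Q x := by
  simp only [quadForm, mulVec_smul, dotProduct_smul, smul_dotProduct, smul_eq_mul]
  ring

lemma quadForm_neg (Q : Matrix (Fin d) (Fin d) ℝ) (x : Fin d → ℝ) :
    quadForm Q (-x) = quadForm Q x := by
  simp [quadForm, mulVec_neg]

lemma dotProduct_mulVec_comm (hQ : Q.IsSymm) (x y : Fin d → ℝ) :
    x ⬝ᵥ Q *ᵥ y = y ⬝ᵥ Q *ᵥ x := by
  rw [dotProduct_mulVec, ← mulVec_transpose, hQ.eq, dotProduct_comm]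

lemma quadForm_add (hQ : Q.IsSymm) (x y : Fin d → ℝ) :
    quadForm Q (x + y) = quadForm Q x + 2 * (x ⬝ᵥ Q *ᵥ y) + quadForm Q y := by
  simp only [quadForm, mulVec_add, dotProduct_add, add_dotProduct, dotProduct_mulVec_comm hQ y x]
  ring

lemma quadForm_sub (hQ : Q.IsSymm) (x y : Fin d → ℝ) :
    quadForm Q (x - y) = quadForm Q x - 2 * (x ⬝ᵥ Q *ᵥ y) + quadForm Q y := by
  rw [sub_eq_add_neg, quadForm_add hQ, mulVec_neg, dotProduct_neg, ← neg_one_smul ℝ y,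
    quadForm_smul]
  ring

lemma continuous_quadForm (Q : Matrix (Fin d) (Fin d) ℝ) : Continuous (quadForm Q) := by
  unfold quadForm
  fun_prop

lemma quadForm_pos (hQ : Q.PosDef) {x : Fin d → ℝ} (hx : x ≠ 0) : 0 < quadForm Q x := by
  simpa [quadForm] using hQ.dotProduct_mulVec_pos hx

lemma quadForm_nonneg (hQ : Q.PosDef) (x : Fin d → ℝ) : 0 ≤ quadForm Q x := by
  rcases eq_or_ne x 0 with rfl | hx
  · simp [quadForm]
  · exact (quadForm_pos hQ hx).le

lemma exists_pos_mul_norm_sq_le (hQ : Q.PosDef) :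
    ∃ c > 0, ∀ x : Fin d → ℝ, c * ‖x‖ ^ 2 ≤ quadForm Q x := by
  have unit_mem {x : Fin d → ℝ} (hx : x ≠ 0) : ‖x‖⁻¹ • x ∈ Metric.sphere 0 1 := by
    simp [norm_smul, hx]
  have rescale (x : Fin d → ℝ) (hx : x ≠ 0) :
      quadForm Q x = ‖x‖ ^ 2 * quadForm Q (‖x‖⁻¹ • x) := by
    rw [quadForm_smul, ← mul_assoc, ← mul_pow, mul_inv_cancel₀ (norm_ne_zero_iff.2 hx),
      one_pow, one_mul]
  rcases (Metric.sphere (0 : Fin d → ℝ) 1).eq_empty_or_nonempty with hS | hS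
  · refine ⟨1, one_pos, fun x => ?_⟩
    obtain rfl : x = 0 := by
      by_contra hx
      simpa [hS] using unit_mem hx
    simp [quadForm]
  obtain ⟨x₀, hx₀, hmin⟩ :=
    (isCompact_sphere 0 1).exists_isMinOn hS (continuous_quadForm Q).continuousOn
  refine ⟨quadForm Q x₀, quadForm_pos hQ (ne_zero_of_mem_unit_sphere ⟨x₀, hx₀⟩), fun x => ?_⟩
  rcases eq_or_ne x 0 with rfl | hx
  · simp [quadForm]
  · rw [rescale x hx, mul_comm]
    exact mul_le_mul_of_nonneg_left (hmin (unit_mem hx)) (by positivity)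

lemma finite_setOf_quadForm_sub_intCast_le (hQ : Q.PosDef) (x : Fin d → ℝ) (C : ℝ) :
    {w : Fin d → ℤ | quadForm Q (x - intCast w) ≤ C}.Finite := by
  obtain ⟨c, hc, hcQ⟩ := exists_pos_mul_norm_sq_le hQ
  refine ((isCompact_closedBall (0 : Fin d → ℤ) (‖x‖ + √(C / c))).finite_of_discrete).subset
    fun w hw => ?_
  have hdist : ‖x - intCast w‖ ≤ √(C / c) :=
    Real.le_sqrt_of_sq_le ((le_div_iff₀' hc).2 ((hcQ _).trans hw))
  have hnorm : ‖intCast w‖ ≤ ‖x‖ + √(C / c) := by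
    calc ‖intCast w‖ = ‖x - (x - intCast w)‖ := by rw [sub_sub_cancel]
      _ ≤ ‖x‖ + ‖x - intCast w‖ := norm_sub_le _ _
      _ ≤ ‖x‖ + √(C / c) := by gcongr
  rw [Metric.mem_closedBall, dist_pi_le_iff (by positivity)]
  intro i
  rw [← Int.dist_cast_real]
  simpa [intCast] using (dist_le_pi_dist (intCast w) 0 i).trans (by simpa using hnorm)

lemma quadForm_add_add_add_sub (hQ : Q.IsSymm) (p q r : Fin d → ℝ) :
    quadForm Q (p + q + r) + quadForm Q (p - q) + quadForm Q (p - r) + quadForm Q (q - r) =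
      3 * (quadForm Q p + quadForm Q q + quadForm Q r) := by
  simp only [quadForm_add hQ, quadForm_sub hQ, add_dotProduct]
  ring

lemma intCast_sub (u v : Fin d → ℤ) : intCast (u - v) = intCast u - intCast v := by
  ext i
  simp [intCast]

lemma intCast_smul (n : ℤ) (w : Fin d → ℤ) : intCast (n • w) = (n : ℝ) • intCast w := by
  ext i
  simp [intCast]

lemma intCast_ne_zero {v : Fin d → ℤ} (hv : v ≠ 0) : intCast v ≠ 0 := by
  contrapose! hv
  ext i
  simpa [intCast] using congrFun hv i

lemma homMin_le (hQ : Q.PosDef) {v : Fin d → ℤ} (hv : v ≠ 0) :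
    homMin Q ≤ quadForm Q (intCast v) :=
  csInf_le ⟨0, by rintro r ⟨w, -, rfl⟩; exact quadForm_nonneg hQ _⟩ ⟨v, hv, rfl⟩

lemma exists_quadForm_eq_homMin [NeZero d] (hQ : Q.PosDef) :
    ∃ v : Fin d → ℤ, v ≠ 0 ∧ quadForm Q (intCast v) = homMin Q := by
  have hne : {v : Fin d → ℤ | v ≠ 0}.Nonempty :=
    ⟨Pi.single 0 1, Pi.single_ne_zero_iff.2 one_ne_zero⟩
  obtain ⟨v, hv, hmin⟩ := exists_isMinOn_of_finite_sublevel (f := fun v => quadForm Q (intCast v))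
    hne fun C => (finite_setOf_quadForm_sub_intCast_le hQ 0 C).subset fun w hw => by
      simpa [quadForm_neg] using hw.2
  refine ⟨v, hv, (IsLeast.csInf_eq
    (s := {r | ∃ w : Fin d → ℤ, w ≠ 0 ∧ r = quadForm Q (intCast w)}) ⟨⟨v, hv, rfl⟩, ?_⟩).symm⟩
  rintro r ⟨w, hw, rfl⟩
  exact hmin hw

lemma homMin_pos [NeZero d] (hQ : Q.PosDef) : 0 < homMin Q := by
  obtain ⟨v, hv, hvmin⟩ := exists_quadForm_eq_homMin hQ
  exact hvmin ▸ quadForm_pos hQ (intCast_ne_zero hv)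

lemma bddBelow_range_quadForm_sub_intCast (hQ : Q.PosDef) (x : Fin d → ℝ) :
    BddBelow (Set.range fun v : Fin d → ℤ => quadForm Q (x - intCast v)) :=
  ⟨0, by rintro r ⟨v, rfl⟩; exact quadForm_nonneg hQ _⟩

lemma iInf_quadForm_sub_intCast_le_inhomMin (hQ : Q.PosDef) (x : Fin d → ℝ) :
    ⨅ v : Fin d → ℤ, quadForm Q (x - intCast v) ≤ inhomMin Q := by
  refine le_ciSup (f := fun x : Fin d → ℝ => ⨅ v : Fin d → ℤ, quadForm Q (x - intCast v)) ?_ x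
  obtain ⟨M, hM⟩ := (isCompact_Icc (a := (0 : Fin d → ℝ)) (b := 1)).bddAbove_image
    (continuous_quadForm Q).continuousOn
  refine ⟨M, ?_⟩
  rintro r ⟨y, rfl⟩
  have hfract : y - intCast (fun i => ⌊y i⌋) ∈ Set.Icc 0 1 :=
    ⟨fun i => by simp [intCast, Int.fract_nonneg],
      fun i => by simpa [intCast] using (Int.fract_lt_one (y i)).le⟩
  exact (ciInf_le (bddBelow_range_quadForm_sub_intCast hQ y) _).trans (hM ⟨_, hfract, rfl⟩)

lemma homMin_le_three_mul_inhomMin_of_empty_circle (hQ : IsPQF Q) {x : Fin d → ℝ}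
    {v u : Fin d → ℤ} (hv : v ≠ 0) (hu : u ≠ 0) (huv : u ≠ v)
    (hempty : ∀ w, quadForm Q x ≤ quadForm Q (x - intCast w))
    (hxv : quadForm Q (x - intCast v) = quadForm Q x)
    (hxu : quadForm Q (x - intCast u) = quadForm Q x) :
    homMin Q ≤ 3 * inhomMin Q := by
  have hthree := quadForm_add_add_add_sub hQ.1 x (x - intCast v) (x - intCast u)
  rw [sub_sub_cancel, sub_sub_cancel, sub_sub_sub_cancel_left, ← intCast_sub, hxv, hxu] at hthree
  have hx : quadForm Q x ≤ inhomMin Q :=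
    (le_ciInf hempty).trans (iInf_quadForm_sub_intCast_le_inhomMin hQ.2 x)
  have := quadForm_nonneg hQ.2 (x + (x - intCast v) + (x - intCast u))
  linarith [homMin_le hQ.2 hv, homMin_le hQ.2 hu, homMin_le hQ.2 (sub_ne_zero.2 huv)]

/-- A minimal vector `v` is primitive, so `Q[2w - v] ≥ Q[v]` for every lattice vector `w`. -/
lemma dotProduct_mulVec_le_quadForm (hQ : IsPQF Q) {v : Fin d → ℤ} (hv : v ≠ 0)
    (hvmin : quadForm Q (intCast v) = homMin Q) (w : Fin d → ℤ) :
    intCast v ⬝ᵥ Q *ᵥ intCast w ≤ quadForm Q (intCast w) := by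
  have hexpand : quadForm Q (intCast ((2 : ℤ) • w - v)) = 4 * quadForm Q (intCast w)
      - 4 * (intCast v ⬝ᵥ Q *ᵥ intCast w) + quadForm Q (intCast v) := by
    rw [intCast_sub, intCast_smul, quadForm_sub hQ.1, quadForm_smul, smul_dotProduct,
      dotProduct_mulVec_comm hQ.1 (intCast w)]
    norm_num
    ring
  by_cases h2w : (2 : ℤ) • w = v
  · have hw : w ≠ 0 := by rintro rfl; simp [← h2w] at hv
    have h4 : quadForm Q (intCast v) = 4 * quadForm Q (intCast w) := by
      rw [← h2w, intCast_smul, quadForm_smul]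
      norm_num
    linarith [homMin_le hQ.2 hw, quadForm_pos hQ.2 (intCast_ne_zero hv)]
  · linarith [homMin_le hQ.2 (sub_ne_zero.2 h2w)]

end QuadForm

namespace BinaryQuadForm

open QuadForm

variable {Q : Matrix (Fin 2) (Fin 2) ℝ}

def cross (v w : Fin 2 → ℝ) : ℝ := v 0 * w 1 - v 1 * w 0

/-- The center of the `Q`-circle through `0` and `v` on which `w` lies exactly when
`Q[w] - ⟨v, w⟩_Q = s · cross v w`: the vector `![-(Q *ᵥ v) 1, (Q *ᵥ v) 0]` is `Q`-orthogonal
to `v` and pairs with `w` to `det Q · cross v w`. -/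
def bisectorPoint (Q : Matrix (Fin 2) (Fin 2) ℝ) (v : Fin 2 → ℝ) (s : ℝ) : Fin 2 → ℝ :=
  (1 / 2 : ℝ) • v + (s / (2 * Q.det)) • ![-(Q *ᵥ v) 1, (Q *ᵥ v) 0]

lemma perp_dotProduct_mulVec (hQ : Q.IsSymm) (v w : Fin 2 → ℝ) :
    ![-(Q *ᵥ v) 1, (Q *ᵥ v) 0] ⬝ᵥ Q *ᵥ w = Q.det * cross v w := by
  simp [dotProduct, mulVec, Fin.sum_univ_two, det_fin_two, cross, hQ.apply 1 0]
  ring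

lemma quadForm_bisectorPoint_sub (hQ : IsPQF Q) (v w : Fin 2 → ℝ) (s : ℝ) :
    quadForm Q (bisectorPoint Q v s - w) = quadForm Q (bisectorPoint Q v s)
      + (quadForm Q w - v ⬝ᵥ Q *ᵥ w - s * cross v w) := by
  have hdet := hQ.2.det_pos.ne'
  rw [quadForm_sub hQ.1, bisectorPoint, add_dotProduct, smul_dotProduct, smul_dotProduct,
    perp_dotProduct_mulVec hQ.1, smul_eq_mul, smul_eq_mul]
  field_simp
  ring

lemma exists_empty_circle (hQ : IsPQF Q) {v : Fin 2 → ℤ} (hv : v ≠ 0)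
    (hmid : ∀ w : Fin 2 → ℤ, intCast v ⬝ᵥ Q *ᵥ intCast w ≤ quadForm Q (intCast w)) :
    ∃ (x : Fin 2 → ℝ) (u : Fin 2 → ℤ), u ≠ 0 ∧ u ≠ v ∧
      (∀ w, quadForm Q x ≤ quadForm Q (x - intCast w)) ∧
      quadForm Q (x - intCast v) = quadForm Q x ∧ quadForm Q (x - intCast u) = quadForm Q x := by
  set excess : (Fin 2 → ℤ) → ℝ := fun w =>
    quadForm Q (intCast w) - intCast v ⬝ᵥ Q *ᵥ intCast w with hexcess
  set side : (Fin 2 → ℤ) → ℝ := fun w => cross (intCast v) (intCast w) with hside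
  have hpos : {w | 0 < side w}.Nonempty := by
    refine ⟨![-v 1, v 0], ?_⟩
    have : v 0 ≠ 0 ∨ v 1 ≠ 0 := by
      by_contra! h
      exact hv (funext (Fin.forall_fin_two.2 h))
    simp only [Set.mem_ofPred_eq, hside, cross, intCast, Matrix.cons_val_zero,
      Matrix.cons_val_one, Int.cast_neg]
    rcases this with h | h
    · nlinarith [sq_pos_of_ne_zero (Int.cast_ne_zero.2 h : (v 0 : ℝ) ≠ 0), sq_nonneg (v 1 : ℝ)]
    · nlinarith [sq_pos_of_ne_zero (Int.cast_ne_zero.2 h : (v 1 : ℝ) ≠ 0), sq_nonneg (v 0 : ℝ)]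
  obtain ⟨u, hu, hmin⟩ := exists_isMinOn_of_finite_sublevel (f := fun w => excess w / side w)
    hpos fun c => by
      refine (finite_setOf_quadForm_sub_intCast_le hQ.2 (bisectorPoint Q (intCast v) c)
        (quadForm Q (bisectorPoint Q (intCast v) c))).subset fun w ⟨hw, hwc⟩ => ?_
      have := (div_le_iff₀ hw).1 hwc
      simp only [Set.mem_ofPred_eq, quadForm_bisectorPoint_sub hQ]
      linarith
  set ρ := excess u / side u
  have hρ : 0 ≤ ρ := div_nonneg (sub_nonneg.2 (hmid u)) (le_of_lt hu)
  refine ⟨bisectorPoint Q (intCast v) ρ, u, ?_, ?_, fun w => ?_, ?_, ?_⟩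
  · rintro rfl
    simp [hside, cross, intCast] at hu
  · rintro rfl
    simp [hside, cross] at hu
    linarith
  · rw [quadForm_bisectorPoint_sub hQ, le_add_iff_nonneg_right]
    rcases le_or_gt (side w) 0 with hw | hw
    · nlinarith [hmid w]
    · have := (le_div_iff₀ hw).1 (hmin hw)
      linarith
  · have hcross : cross (intCast v) (intCast v) = 0 := by rw [cross]; ring
    rw [quadForm_bisectorPoint_sub hQ, hcross]
    simp [quadForm]
  · rw [quadForm_bisectorPoint_sub hQ]
    have : ρ * side u = excess u := div_mul_cancel₀ _ hu.ne'
    simp only [hside, hexcess] at this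
    linarith

theorem homMin_le_three_mul_inhomMin (hQ : IsPQF Q) : homMin Q ≤ 3 * inhomMin Q := by
  obtain ⟨v, hv, hvmin⟩ := exists_quadForm_eq_homMin hQ.2
  obtain ⟨x, u, hu, huv, hempty, hxv, hxu⟩ :=
    exists_empty_circle hQ hv (dotProduct_mulVec_le_quadForm hQ hv hvmin)
  exact homMin_le_three_mul_inhomMin_of_empty_circle hQ hv hu huv hempty hxv hxu

end BinaryQuadForm

open QuadForm

lemma quadForm_QAstar_two (x : Fin 2 → ℝ) :
    quadForm (QAstar 2) x = 2 * x 0 ^ 2 - 2 * x 0 * x 1 + 2 * x 1 ^ 2 := by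
  simp [quadForm, QAstar, dotProduct, mulVec, Fin.sum_univ_two]
  ring

lemma isPQF_QAstar_two : IsPQF (QAstar 2) := by
  have hsymm : (QAstar 2).IsSymm := by
    ext i j
    fin_cases i <;> fin_cases j <;> simp [QAstar]
  refine ⟨hsymm, .of_dotProduct_mulVec_pos (isHermitian_iff_isSymm.2 hsymm) fun x hx => ?_⟩
  have hx' : x 0 ≠ 0 ∨ x 1 ≠ 0 := by
    by_contra! h
    exact hx (funext (Fin.forall_fin_two.2 h))
  have := quadForm_QAstar_two x
  simp only [quadForm, star_trivial] at this ⊢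
  rw [this]
  rcases hx' with h | h
  · nlinarith [sq_pos_of_ne_zero h, sq_nonneg (x 0 - x 1), sq_nonneg (x 1)]
  · nlinarith [sq_pos_of_ne_zero h, sq_nonneg (x 0 - x 1), sq_nonneg (x 0)]

lemma two_le_homMin_QAstar_two : 2 ≤ homMin (QAstar 2) := by
  refine le_csInf ⟨_, Pi.single 0 1, Pi.single_ne_zero_iff.2 one_ne_zero, rfl⟩ ?_
  rintro r ⟨w, hw, rfl⟩
  have hw' : w 0 ≠ 0 ∨ w 1 ≠ 0 := by
    by_contra! h
    exact hw (funext (Fin.forall_fin_two.2 h))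
  have hpos : 0 < w 0 ^ 2 - w 0 * w 1 + w 1 ^ 2 := by
    rcases hw' with h | h
    · nlinarith [sq_pos_of_ne_zero h, sq_nonneg (2 * w 1 - w 0)]
    · nlinarith [sq_pos_of_ne_zero h, sq_nonneg (2 * w 0 - w 1)]
  have h1 : (1 : ℝ) ≤ (w 0 : ℝ) ^ 2 - w 0 * w 1 + w 1 ^ 2 := by exact_mod_cast hpos
  rw [quadForm_QAstar_two]
  simp only [intCast]
  linarith

lemma exists_corner_quadForm_QAstar_two_le (a b : ℝ) (ha₀ : 0 ≤ a) (ha₁ : a ≤ 1) (hb₀ : 0 ≤ b)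
    (hb₁ : b ≤ 1) : ∃ c₀ c₁ : ℤ,
      2 * (a - c₀) ^ 2 - 2 * (a - c₀) * (b - c₁) + 2 * (b - c₁) ^ 2 ≤ 2 / 3 := by
  wlog hba : b ≤ a generalizing a b
  · obtain ⟨c₀, c₁, h⟩ := this b a hb₀ hb₁ ha₀ ha₁ (le_of_not_ge hba)
    exact ⟨c₁, c₀, by linarith⟩
  by_contra! h
  have h₀ := h 0 0
  have h₁ := h 1 0
  have h₂ := h 1 1
  push_cast at h₀ h₁ h₂
  nlinarith [mul_nonneg (sub_nonneg.2 ha₁) (sub_nonneg.2 hba), mul_nonneg hb₀ (sub_nonneg.2 hba),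
    mul_nonneg hb₀ (sub_nonneg.2 ha₁), sq_nonneg (a - 2 * b), sq_nonneg (2 * a - b - 1),
    sq_nonneg (a + b - 1)]

lemma inhomMin_QAstar_two_le : inhomMin (QAstar 2) ≤ 2 / 3 := by
  refine ciSup_le fun y => ?_
  obtain ⟨c₀, c₁, h⟩ := exists_corner_quadForm_QAstar_two_le (Int.fract (y 0)) (Int.fract (y 1))
    (Int.fract_nonneg _) (Int.fract_lt_one _).le (Int.fract_nonneg _) (Int.fract_lt_one _).le
  refine (ciInf_le (bddBelow_range_quadForm_sub_intCast isPQF_QAstar_two.2 y)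
    ![⌊y 0⌋ + c₀, ⌊y 1⌋ + c₁]).trans ?_
  rw [quadForm_QAstar_two]
  simp only [Pi.sub_apply, intCast, Matrix.cons_val_zero, Matrix.cons_val_one, Int.cast_add,
    Int.fract] at h ⊢
  linarith

lemma two_div_sqrt_three : 2 / √3 = 2 * √(1 / 3) := by
  rw [one_div, Real.sqrt_inv, div_eq_mul_inv]

/-- Ryshkov's theorem: every binary PQF has packing-covering constant at least `2/√3`,
attained by `Q_{A*_2}`. -/
theorem packing_covering_optimal_dim2 :
    (∀ Q : Matrix (Fin 2) (Fin 2) ℝ, IsPQF Q →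
      2 / Real.sqrt 3 ≤ pcConst Q) ∧
    pcConst (QAstar 2) = 2 / Real.sqrt 3 := by
  refine ⟨fun Q hQ => ?_, ?_⟩
  · rw [pcConst, two_div_sqrt_three]
    refine mul_le_mul_of_nonneg_left (Real.sqrt_le_sqrt ?_) zero_le_two
    rw [le_div_iff₀ (homMin_pos hQ.2)]
    linarith [BinaryQuadForm.homMin_le_three_mul_inhomMin hQ]
  · have hlower := BinaryQuadForm.homMin_le_three_mul_inhomMin isPQF_QAstar_two
    have hratio : inhomMin (QAstar 2) / homMin (QAstar 2) = 1 / 3 := by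
      rw [div_eq_iff (homMin_pos isPQF_QAstar_two.2).ne']
      linarith [inhomMin_QAstar_two_le, two_le_homMin_QAstar_two]
    rw [pcConst, hratio, two_div_sqrt_three]
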